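/- arXiv:0706.1807 — 6 statements merged into one kernel-verified Lean document; each statement's English description precedes it below -/
import Mathlib

section
/- Let q and r be distinct primes and let D = V ⋊ Z/r be as above (V = additive group of F_{q^{r-1}}, generator acting by multiplication by an element ζ of order r). If g = (v,i) and h = (w,j) commute in D and g ∉ V (i.e. i ≢ 0 mod r), then h is a power of g. -/
open Multiplicative

/-- Left multiplication by a unit, as a multiplicative automorphism of the additive
group of the field, written multiplicatively. -/
def unitMulAut (F : Type*) [Field F] : Fˣ →* MulAut (Multiplicative F) where
  toFun u := AddEquiv.toMultiplicative (AddAut.mulLeft u)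
  map_one' := by ext x; simp <;> rfl
  map_mul' u v := by ext x; simp [mul_assoc] <;> rfl

/-- The group `D = V ⋊ ℤ/r`, where `V` is the additive group of the field `F` and the
generator of `ℤ/r` acts by multiplication by `ζ = χ (ofAdd 1)`; multiplication is
`(v,i)·(w,j) = (v + ζ^i w, i+j)`. -/
abbrev DD {r : ℕ} (F : Type*) [Field F] (χ : Multiplicative (ZMod r) →* Fˣ) :=
  Multiplicative F ⋊[(unitMulAut F).comp χ] Multiplicative (ZMod r)

/-! Write `g = (v, i)` with `i ≠ 0`. Since `ℤ/r` has prime order, `i` generates it, so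
`h = (w, k i)` for some `k`, and `h (g ^ k)⁻¹ = (n, 0)` commutes with `g`. Conjugating `(n, 0)`
by `g` multiplies `n` by `ζ ^ i ≠ 1`, so `n = 0` and `h = g ^ k`. -/

theorem map_ne_one_of_prime_card {G M : Type*} [Group G] [Monoid M] {p : ℕ} [Fact p.Prime]
    (hG : Nat.card G = p) (f : G →* M) {x y : G} (hx : f x ≠ 1) (hy : y ≠ 1) : f y ≠ 1 := by
  obtain ⟨m, rfl⟩ := mem_powers_of_prime_card hG hy (g' := x)
  intro hfy
  exact hx (by rw [map_pow, hfy, one_pow])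

namespace SemidirectProduct

variable {N G : Type*} [CommGroup N] [Group G] {φ : G →* MulAut N}

theorem commute_inl_iff (g : N ⋊[φ] G) (n : N) : Commute g (inl n) ↔ φ g.right n = n := by
  simp [Commute, SemiconjBy, SemidirectProduct.ext_iff, mul_comm g.left]

theorem eq_of_commute_of_right_eq {g a b : N ⋊[φ] G} (hfix : ∀ n, φ g.right n = n → n = 1)
    (ha : Commute g a) (hb : Commute g b) (hab : a.right = b.right) : a = b := by
  have hinl : a * b⁻¹ = inl (a * b⁻¹).left := SemidirectProduct.ext rfl (by simp [hab])
  have hcomm : Commute g (inl (a * b⁻¹).left) := hinl ▸ ha.mul_right hb.inv_right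
  have hleft : (a * b⁻¹).left = 1 := hfix _ ((commute_inl_iff g _).1 hcomm)
  rw [← mul_inv_eq_one, hinl, hleft, map_one]

end SemidirectProduct

theorem unitMulAut_apply_eq_self_iff {F : Type*} [Field F] (u : Fˣ) (n : Multiplicative F) :
    unitMulAut F u n = n ↔ u = 1 ∨ n = 1 := by
  change ofAdd ((u : F) * toAdd n) = n ↔ _
  rw [← toAdd.injective.eq_iff, toAdd_ofAdd, mul_left_eq_self₀, Units.val_eq_one, toAdd_eq_zero]

theorem commuting_with_non_V_element_is_power_general {r : ℕ} (hr : r.Prime)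
    {F : Type*} [Field F]
    (χ : Multiplicative (ZMod r) →* Fˣ) (hχ : orderOf (χ (ofAdd 1)) = r)
    (g h : DD F χ) (hcomm : g * h = h * g) (hg : g.right ≠ 1) :
    ∃ k : ℕ, h = g ^ k := by
  have : Fact r.Prime := ⟨hr⟩
  have hcard : Nat.card (Multiplicative (ZMod r)) = r := by simp
  have hζ : χ g.right ≠ 1 := by
    refine map_ne_one_of_prime_card hcard χ (x := ofAdd 1) ?_ hg
    rw [Ne, ← orderOf_eq_one_iff, hχ]
    exact hr.ne_one
  obtain ⟨k, hk⟩ := mem_powers_of_prime_card hcard hg (g' := h.right)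
  refine ⟨k, SemidirectProduct.eq_of_commute_of_right_eq ?_ hcomm (Commute.self_pow g k) ?_⟩
  · intro n hn
    exact ((unitMulAut_apply_eq_self_iff _ n).1 hn).resolve_left hζ
  · rw [← hk]
    exact (map_pow SemidirectProduct.rightHom g k).symm

theorem commuting_with_non_V_element_is_power {q r : ℕ} (hq : q.Prime) (hr : r.Prime)
    (hqr : q ≠ r) {F : Type*} [Field F] [Fintype F] (hF : Fintype.card F = q ^ (r - 1))
    (χ : Multiplicative (ZMod r) →* Fˣ) (hχ : orderOf (χ (ofAdd 1)) = r)
    (g h : DD F χ) (hcomm : g * h = h * g) (hg : g.right ≠ 1) :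
    ∃ k : ℕ, h = g ^ k :=
  commuting_with_non_V_element_is_power_general hr χ hχ g h hcomm hg
end

section
/- Let H = W ≀ P be a wreath product over a finite index set I. Suppose α = γ^m in H. Then α̂ = γ̂^m, and for each index i, the cycle-product satisfies π_i(α) = (π_i(γ))^{m / gcd(ℓ_i(γ̂), m)}, where ℓ_i(γ̂) is the length of the cycle of γ̂ containing i. -/
/-- The wreath product `W ≀ P` over an index set `I` on which `P` acts: underlying set
`(I → W) × P`, with multiplication `(αβ)_i = α_i · β_{i·α̂}` (indices permuted on the
right, so underlying elements of `P` compose left-to-right). -/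
def Wreath (W P I : Type*) : Type _ := (I → W) × P

namespace Wreath

variable {W P I : Type*} [Group W] [Group P] [MulAction P I]

instance : Group (Wreath W P I) where
  mul α β := (fun i => α.1 i * β.1 (α.2 • i), β.2 * α.2)
  one := (fun _ => 1, 1)
  inv α := (fun i => (α.1 (α.2⁻¹ • i))⁻¹, α.2⁻¹)
  mul_assoc a b c := Prod.ext (funext fun i => by
      show (a.1 i * b.1 (a.2 • i)) * c.1 ((b.2 * a.2) • i)
        = a.1 i * (b.1 (a.2 • i) * c.1 (b.2 • a.2 • i))
      rw [mul_smul, mul_assoc]) (mul_assoc _ _ _).symm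
  one_mul a := Prod.ext (funext fun i => by
      show 1 * a.1 ((1 : P) • i) = a.1 i
      rw [one_smul, one_mul]) (mul_one _)
  mul_one a := Prod.ext (funext fun i => by
      show a.1 i * 1 = a.1 i
      rw [mul_one]) (one_mul _)
  inv_mul_cancel a := Prod.ext (funext fun i => by
      show (a.1 (a.2⁻¹ • i))⁻¹ * a.1 (a.2⁻¹ • i) = 1
      rw [inv_mul_cancel]) (mul_inv_cancel _)

/-- The components `α_i ∈ W` of an element of the wreath product. -/
def fn (α : Wreath W P I) : I → W := α.1

/-- The underlying element `α̂ ∈ P` of an element of the wreath product. -/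
def pm (α : Wreath W P I) : P := α.2

@[simp] lemma fn_mul (α β : Wreath W P I) (i : I) :
    (α * β).fn i = α.fn i * β.fn (α.pm • i) := rfl

@[simp] lemma pm_mul (α β : Wreath W P I) : (α * β).pm = β.pm * α.pm := rfl

/-- The length `ℓ_i(α̂)` of the cycle of `α̂` containing `i`. -/
noncomputable def cycleLen (α : Wreath W P I) (i : I) : ℕ :=
  Function.minimalPeriod (α.pm • ·) i

/-- The cycle-product `π_i(α) = α_i · α_{i·α̂} · α_{i·α̂²} ⋯ α_{i·α̂^{ℓ-1}}`. -/
noncomputable def cycleProd (α : Wreath W P I) (i : I) : W :=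
  ((List.range (α.cycleLen i)).map (fun k => α.fn (α.pm ^ k • i))).prod

end Wreath


section Aux

variable {W P I : Type*} [Group W] [Group P] [MulAction P I]

lemma Wreath.pm_pow (γ : Wreath W P I) (m : ℕ) : (γ ^ m).pm = γ.pm ^ m := by
  induction m with
  | zero => rw [pow_zero, pow_zero]; rfl
  | succ n ih =>
    rw [pow_succ']
    show (γ ^ n).pm * γ.pm = _
    rw [ih, ← pow_succ]

lemma Wreath.fn_pow (γ : Wreath W P I) (m : ℕ) (i : I) :
    (γ ^ m).fn i = ((List.range m).map (fun k => γ.fn (γ.pm ^ k • i))).prod := by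
  induction m generalizing i with
  | zero => rfl
  | succ n ih =>
    rw [pow_succ', fn_mul, ih, List.range_succ_eq_map, List.map_cons, List.prod_cons,
      List.map_map]
    congr 1
    · rw [pow_zero, one_smul]
    · congr 1
      refine List.map_congr_left fun k _ => ?_
      simp only [Function.comp_apply]
      rw [pow_succ, mul_smul]

lemma prod_range_periodic {ℓ : ℕ} (F : ℕ → W) (hF : ∀ t, F (ℓ + t) = F t) (s : ℕ) :
    ((List.range (ℓ * s)).map F).prod = ((List.range ℓ).map F).prod ^ s := by
  induction s with
  | zero => simp
  | succ n ih =>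
    have : ℓ * (n + 1) = ℓ + ℓ * n := by ring
    rw [this, List.range_add, List.map_append, List.prod_append, List.map_map, pow_succ']
    congr 1
    rw [← ih]
    congr 1
    exact List.map_congr_left fun k _ => hF k

lemma mem_periodicPts_of_finite [Fintype I] (p : P) (i : I) :
    i ∈ Function.periodicPts (p • ·) := by
  obtain ⟨a, b, hne, hab⟩ := Finite.exists_ne_map_eq_of_infinite (fun n : ℕ => p ^ n • i)
  rcases hne.lt_or_gt with hlt | hlt
  · refine ⟨b - a, by omega, ?_⟩
    rw [Function.IsPeriodicPt, Function.IsFixedPt, smul_iterate_apply]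
    have : p ^ a • p ^ (b - a) • i = p ^ a • i := by
      rw [← mul_smul, ← pow_add, show a + (b - a) = b by omega]; exact hab.symm
    exact smul_left_cancel _ this
  · refine ⟨a - b, by omega, ?_⟩
    rw [Function.IsPeriodicPt, Function.IsFixedPt, smul_iterate_apply]
    have : p ^ b • p ^ (a - b) • i = p ^ b • i := by
      rw [← mul_smul, ← pow_add, show b + (a - b) = a by omega]; exact hab
    exact smul_left_cancel _ this

lemma div_gcd_mul_eq (l m : ℕ) (hl : 0 < l) :
    l / Nat.gcd l m * m = l * (m / Nat.gcd l m) := by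
  have hg : 0 < Nat.gcd l m := Nat.gcd_pos_of_pos_left _ hl
  obtain ⟨a, ha⟩ := Nat.gcd_dvd_left l m
  obtain ⟨b, hb⟩ := Nat.gcd_dvd_right l m
  generalize hG : Nat.gcd l m = G at *
  rw [Nat.div_eq_of_eq_mul_right hg ha, Nat.div_eq_of_eq_mul_right hg hb, ha, hb]
  ring

end Aux

theorem cycleProd_of_power {W P I : Type*} [Group W] [Group P] [MulAction P I]
    [Fintype I] (α γ : Wreath W P I) (m : ℕ) (h : α = γ ^ m) :
    α.pm = γ.pm ^ m ∧
    ∀ i : I, α.cycleProd i = γ.cycleProd i ^ (m / Nat.gcd (γ.cycleLen i) m) := by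
  subst h
  refine ⟨γ.pm_pow m, fun i => ?_⟩
  set p := γ.pm with hp
  have hper : i ∈ Function.periodicPts (p • ·) := mem_periodicPts_of_finite p i
  set ℓ := γ.cycleLen i with hℓ
  have hℓpos : 0 < ℓ := Function.minimalPeriod_pos_of_mem_periodicPts hper
  set g := Nat.gcd ℓ m with hg
  have hgpos : 0 < g := Nat.gcd_pos_of_pos_left _ hℓpos
  have hlen : (γ ^ m).cycleLen i = ℓ / g := by
    show Function.minimalPeriod ((γ ^ m).pm • ·) i = _
    rw [γ.pm_pow m, ← smul_iterate]
    exact Function.minimalPeriod_iterate_eq_div_gcd' hper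
  set F : ℕ → W := fun t => γ.fn (p ^ t • i) with hF
  have hFper : ∀ t, F (ℓ + t) = F t := by
    intro t
    have hfix : p ^ ℓ • i = i := MulAction.pow_period_smul p i
    show γ.fn (p ^ (ℓ + t) • i) = γ.fn (p ^ t • i)
    rw [add_comm, pow_add, mul_smul, hfix]
  have hexp : (γ ^ m).cycleProd i = ((List.range ((ℓ / g) * m)).map F).prod := by
    show ((List.range ((γ ^ m).cycleLen i)).map
        (fun k => (γ ^ m).fn ((γ ^ m).pm ^ k • i))).prod = _
    rw [hlen, γ.pm_pow m]
    induction (ℓ / g) with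
    | zero => simp
    | succ n ih =>
      rw [List.range_succ, List.map_append, List.prod_append,
        show (n + 1) * m = n * m + m by ring, List.range_add, List.map_append,
        List.prod_append, ih]
      congr 1
      simp only [List.map_cons, List.map_nil, List.prod_cons, List.prod_nil, mul_one]
      rw [γ.fn_pow m, List.map_map]
      congr 1
      refine List.map_congr_left fun k _ => ?_
      simp only [Function.comp_apply]
      show γ.fn (γ.pm ^ k • (γ.pm ^ m) ^ n • i) = γ.fn (γ.pm ^ (n * m + k) • i)
      rw [← pow_mul, ← mul_smul, ← pow_add]
      congr 2
      ring
  have harith : (ℓ / g) * m = ℓ * (m / g) := div_gcd_mul_eq ℓ m hℓpos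
  rw [hexp, harith, prod_range_periodic F hFper]
  rfl
end

section
/- Let H = W ≀ P be a wreath product over a finite index set I, and let α ∈ H be such that for every index i, the cycle length ℓ_i(α̂) is coprime to the order of the cycle-product π_i(α). Then α is conjugate in H to an element γ with γ̂ = α̂ that is in standard form (γ_{i·γ̂} = γ_i for all i), with π_i(γ) conjugate to π_i(α) for all i, and such that π_i(γ) = 1 iff γ_i = 1. -/
/-!
Conjugating `α` by an element `δ` of the base group `W^I` (so `δ̂ = 1`) keeps `α̂` and replaces
`α_i` by `δ_i α_i δ_{i·α̂}⁻¹`. On the cycle of length `ℓ` through a chosen point `r`, put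
`π = π_r(α)`; coprimality of `ℓ` and the order of `π` gives `c = π^m` with `c^ℓ = π`. Since
`(αᵏ)_r = α_r α_{r·α̂} ⋯ α_{r·α̂^(k-1)}`, setting `δ_{r·α̂ᵏ} = c⁻ᵏ (αᵏ)_r` is well defined (it is
`ℓ`-periodic in `k` because `(α^ℓ)_r = π = c^ℓ`) and makes every component on the cycle equal to
`c`. The conjugate is then in standard form, its cycle-product `c^ℓ = π_r(α)` is conjugate to
`π_i(α)` for every `i` on the cycle, and it is trivial only if `c = π^m` is.
-/

namespace MulAction

variable {G α : Type*} [Group G] [MulAction G α]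

theorem minimalPeriod_zpow_smul (a : G) (b : α) (z : ℤ) :
    Function.minimalPeriod (a • ·) (a ^ z • b) = Function.minimalPeriod (a • ·) b := by
  refine Nat.dvd_right_iff_eq.1 fun n => ?_
  rw [← pow_smul_eq_iff_minimalPeriod_dvd, ← pow_smul_eq_iff_minimalPeriod_dvd, ← mul_smul,
    ← zpow_natCast, zpow_mul_comm, mul_smul, smul_left_cancel_iff]

theorem apply_zpow_smul {β : Type*} {f : α → β} {a : G} (h : ∀ b, f (a • b) = f b) (z : ℤ)
    (b : α) : f (a ^ z • b) = f b := by
  induction z using Int.induction_on generalizing b with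
  | zero => rw [zpow_zero, one_smul]
  | succ n ih => rw [zpow_add_one, mul_smul, ih, h]
  | pred n ih => rw [zpow_sub_one, mul_smul, ih, ← h, smul_inv_smul]

theorem _root_.Function.Periodic.eq_of_zpow_smul_eq {β : Type*} {f : ℤ → β} {a : G} {b : α}
    (hf : Function.Periodic f (Function.minimalPeriod (a • ·) b)) {m n : ℤ}
    (h : a ^ m • b = a ^ n • b) : f m = f n := by
  obtain ⟨k, hk⟩ : (Function.minimalPeriod (a • ·) b : ℤ) ∣ m - n := by
    rw [← zpow_smul_eq_iff_minimalPeriod_dvd, sub_eq_neg_add, zpow_add, mul_smul, h, zpow_neg,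
      inv_smul_smul]
  rw [show m = n + k * Function.minimalPeriod (a • ·) b by linarith]
  simpa using hf.int_mul k n

/-- A point of the cycle of `a` through `b`, chosen once for the whole cycle. -/
noncomputable def cycleRep (a : G) (b : α) : α :=
  (⟦b⟧ : orbitRel.Quotient (Subgroup.zpowers a) α).out

theorem cycleRep_smul (a : G) (b : α) : cycleRep a (a • b) = cycleRep a b :=
  congrArg Quotient.out <| Quotient.sound <| orbitRel_apply.2 <|
    mem_orbit_iff.2 ⟨⟨a, Subgroup.mem_zpowers a⟩, rfl⟩

theorem exists_zpow_smul_cycleRep (a : G) (b : α) : ∃ z : ℤ, a ^ z • cycleRep a b = b := by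
  obtain ⟨⟨g, hg⟩, hgb⟩ := mem_orbit_iff.1 <| mem_orbit_symm.1 <| orbitRel_apply.1 <|
    Quotient.mk_out (s := orbitRel (Subgroup.zpowers a) α) b
  obtain ⟨z, rfl⟩ := Subgroup.mem_zpowers_iff.1 hg
  exact ⟨z, hgb⟩

end MulAction

namespace Wreath

open MulAction

section Cycles

variable {W P I : Type*} [Group P] [MulAction P I]

lemma pow_cycleLen_smul (α : Wreath W P I) (i : I) : α.pm ^ α.cycleLen i • i = i :=
  pow_smul_eq_iff_minimalPeriod_dvd.2 dvd_rfl

lemma cycleLen_congr {α β : Wreath W P I} (h : α.pm = β.pm) (i : I) :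
    α.cycleLen i = β.cycleLen i := by
  simp only [cycleLen, h]

lemma cycleLen_zpow_smul (α : Wreath W P I) (z : ℤ) (i : I) :
    α.cycleLen (α.pm ^ z • i) = α.cycleLen i :=
  minimalPeriod_zpow_smul _ _ _

lemma cycleLen_cycleRep (α : Wreath W P I) (i : I) :
    α.cycleLen (cycleRep α.pm i) = α.cycleLen i := by
  obtain ⟨z, hz⟩ := exists_zpow_smul_cycleRep α.pm i
  have h := cycleLen_zpow_smul α z (cycleRep α.pm i)
  rwa [hz, eq_comm] at h

end Cycles

section OfFn

variable {W P I : Type*} [One P]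

def ofFn (d : I → W) : Wreath W P I := (d, 1)

@[simp] lemma pm_ofFn (d : I → W) : (ofFn d : Wreath W P I).pm = 1 := rfl

@[simp] lemma fn_ofFn (d : I → W) : (ofFn d : Wreath W P I).fn = d := rfl

end OfFn

variable {W P I : Type*} [Group W] [Group P] [MulAction P I]

@[simp] lemma pm_inv (α : Wreath W P I) : α⁻¹.pm = α.pm⁻¹ := rfl

@[simp] lemma fn_inv (α : Wreath W P I) (i : I) : α⁻¹.fn i = (α.fn (α.pm⁻¹ • i))⁻¹ := rfl

@[simp] lemma pm_pow_s11 (α : Wreath W P I) (n : ℕ) : (α ^ n).pm = α.pm ^ n := by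
  induction n with
  | zero => rw [pow_zero, pow_zero]; rfl
  | succ n ih => rw [pow_succ', pm_mul, ih, pow_succ]

@[simp] lemma pm_zpow (α : Wreath W P I) (z : ℤ) : (α ^ z).pm = α.pm ^ z := by
  cases z with
  | ofNat n => simp only [Int.ofNat_eq_natCast, zpow_natCast, pm_pow_s11]
  | negSucc n => simp only [zpow_negSucc, pm_inv, pm_pow_s11]

lemma fn_pow_s11 (α : Wreath W P I) (n : ℕ) (i : I) :
    (α ^ n).fn i = ((List.range n).map fun k => α.fn (α.pm ^ k • i)).prod := by
  induction n with
  | zero => rfl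
  | succ n ih => simp [pow_succ, ih, List.range_succ]

lemma cycleProd_eq_fn_pow (α : Wreath W P I) (i : I) :
    α.cycleProd i = (α ^ α.cycleLen i).fn i :=
  (fn_pow_s11 α _ i).symm

lemma cycleProd_zpow_smul (α : Wreath W P I) (z : ℤ) (i : I) :
    α.cycleProd (α.pm ^ z • i) = ((α ^ z).fn i)⁻¹ * α.cycleProd i * (α ^ z).fn i := by
  have h := congrArg (fn · i) (zpow_mul_comm α z (α.cycleLen i))
  simp only [fn_mul, pm_zpow, zpow_natCast, pm_pow_s11, pow_cycleLen_smul] at h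
  rw [cycleProd_eq_fn_pow, cycleProd_eq_fn_pow, cycleLen_zpow_smul, mul_assoc]
  exact eq_inv_mul_of_mul_eq h

lemma isConj_cycleProd_zpow_smul (α : Wreath W P I) (z : ℤ) (i : I) :
    IsConj (α.cycleProd i) (α.cycleProd (α.pm ^ z • i)) :=
  isConj_iff.2 ⟨((α ^ z).fn i)⁻¹, by rw [cycleProd_zpow_smul]; group⟩

lemma isConj_cycleProd_cycleRep (α : Wreath W P I) (i : I) :
    IsConj (α.cycleProd (cycleRep α.pm i)) (α.cycleProd i) := by
  obtain ⟨z, hz⟩ := exists_zpow_smul_cycleRep α.pm i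
  have h := isConj_cycleProd_zpow_smul α z (cycleRep α.pm i)
  rwa [hz] at h

lemma fn_pow_of_fn_smul (α : Wreath W P I) (h : ∀ i, α.fn (α.pm • i) = α.fn i) (n : ℕ)
    (i : I) : (α ^ n).fn i = α.fn i ^ n := by
  induction n generalizing i with
  | zero => rw [pow_zero, pow_zero]; rfl
  | succ n ih => rw [pow_succ', fn_mul, ih, h, pow_succ']

lemma cycleProd_of_fn_smul (α : Wreath W P I) (h : ∀ i, α.fn (α.pm • i) = α.fn i) (i : I) :
    α.cycleProd i = α.fn i ^ α.cycleLen i := by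
  rw [cycleProd_eq_fn_pow, fn_pow_of_fn_smul α h]

lemma pm_ofFn_conj (d : I → W) (α : Wreath W P I) : (ofFn d * α * (ofFn d)⁻¹).pm = α.pm := by
  simp

lemma fn_ofFn_conj (d : I → W) (α : Wreath W P I) (i : I) :
    (ofFn d * α * (ofFn d)⁻¹).fn i = d i * α.fn i * (d (α.pm • i))⁻¹ := by
  simp [mul_assoc]

/-- The component at `α̂ᵏ • r` of a base-group conjugator that turns every component of `α` on
the cycle of `r` into `x`, when `x^ℓ = g π_r(α) g⁻¹`. -/
def conjSeq (α : Wreath W P I) (r : I) (x g : W) (k : ℤ) : W :=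
  x ^ (-k) * g * (α ^ k).fn r

lemma conjSeq_add_one (α : Wreath W P I) (r : I) (x g : W) (k : ℤ) :
    α.conjSeq r x g (k + 1) = x⁻¹ * α.conjSeq r x g k * α.fn (α.pm ^ k • r) := by
  rw [conjSeq, conjSeq, zpow_add_one, fn_mul, pm_zpow]
  group

lemma conjSeq_periodic (α : Wreath W P I) (r : I) {x g : W}
    (h : g * α.cycleProd r * g⁻¹ = x ^ α.cycleLen r) :
    Function.Periodic (α.conjSeq r x g) (α.cycleLen r) := by
  intro k
  have hfn : (α ^ (k + α.cycleLen r)).fn r = α.cycleProd r * (α ^ k).fn r := by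
    rw [add_comm, zpow_add, zpow_natCast, fn_mul, pm_pow_s11, pow_cycleLen_smul, cycleProd_eq_fn_pow]
  rw [conjSeq, conjSeq, hfn, neg_add, zpow_add, zpow_neg x (α.cycleLen r : ℤ), zpow_natCast, ← h]
  group

theorem exists_fn_conj_eq (α : Wreath W P I) (c : I → W) (hc : ∀ i, c (α.pm • i) = c i)
    (hπ : ∀ i, IsConj (α.cycleProd i) (c i ^ α.cycleLen i)) :
    ∃ d : I → W, ∀ i, d i * α.fn i * (d (α.pm • i))⁻¹ = c i := by
  choose g hg using fun i => isConj_iff.1 (hπ i)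
  choose z hz using fun i : I => exists_zpow_smul_cycleRep α.pm i
  set r : I → I := cycleRep α.pm
  set e := fun i : I => α.conjSeq (r i) (c (r i)) (g (r i))
  refine ⟨fun i => e i (z i), fun i => ?_⟩
  have hcr : c (r i) = c i := by
    simpa only [hz] using (apply_zpow_smul hc (z i) (r i)).symm
  have hstep : e (α.pm • i) (z (α.pm • i)) = e i (z i + 1) := by
    have hzs := hz (α.pm • i)
    simp only [e, r, cycleRep_smul] at hzs ⊢
    refine (α.conjSeq_periodic _ (hg _)).eq_of_zpow_smul_eq ?_
    rw [hzs, add_comm, zpow_add, zpow_one, mul_smul]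
    exact congrArg _ (hz i).symm
  simp only [hstep, e, conjSeq_add_one, hz, hcr]
  group

end Wreath

theorem conj_to_reduced_standard_form_general {W P I : Type*} [Group W] [Group P] [MulAction P I]
    (α : Wreath W P I)
    (hco : ∀ i : I, Nat.Coprime (α.cycleLen i) (orderOf (α.cycleProd i))) :
    ∃ γ : Wreath W P I, IsConj α γ ∧ γ.pm = α.pm ∧
      (∀ i : I, γ.fn (γ.pm • i) = γ.fn i) ∧
      (∀ i : I, IsConj (γ.cycleProd i) (α.cycleProd i)) ∧
      (∀ i : I, γ.cycleProd i = 1 ↔ γ.fn i = 1) := by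
  choose m hm using fun i => exists_pow_eq_self_of_coprime (hco i)
  set r : I → I := MulAction.cycleRep α.pm
  set c : I → W := fun i => α.cycleProd (r i) ^ m (r i)
  have hc : ∀ i, c (α.pm • i) = c i := fun i => by simp only [c, r, MulAction.cycleRep_smul]
  have hcpow : ∀ i, c i ^ α.cycleLen i = α.cycleProd (r i) := fun i => by
    rw [← Wreath.cycleLen_cycleRep, pow_right_comm, hm]
  obtain ⟨d, hd⟩ := Wreath.exists_fn_conj_eq α c hc fun i => by
    rw [hcpow]; exact (Wreath.isConj_cycleProd_cycleRep α i).symm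
  set γ := Wreath.ofFn d * α * (Wreath.ofFn d)⁻¹
  have hγpm : γ.pm = α.pm := Wreath.pm_ofFn_conj d α
  have hγfn : ∀ i, γ.fn i = c i := fun i => (Wreath.fn_ofFn_conj d α i).trans (hd i)
  have hγstd : ∀ i, γ.fn (γ.pm • i) = γ.fn i := fun i => by rw [hγpm, hγfn, hγfn, hc]
  have hγπ : ∀ i, γ.cycleProd i = α.cycleProd (r i) := fun i => by
    rw [γ.cycleProd_of_fn_smul hγstd, Wreath.cycleLen_congr hγpm, hγfn, hcpow]
  refine ⟨γ, isConj_iff.2 ⟨Wreath.ofFn d, rfl⟩, hγpm, hγstd,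
    fun i => hγπ i ▸ α.isConj_cycleProd_cycleRep i, fun i => ?_⟩
  rw [hγπ, hγfn]
  constructor
  · intro h
    simp only [c, h, one_pow]
  · intro h
    rw [← hcpow, h, one_pow]

theorem conj_to_reduced_standard_form {W P I : Type*} [Group W] [Group P] [MulAction P I]
    [Fintype I] (α : Wreath W P I)
    (hco : ∀ i : I, Nat.Coprime (α.cycleLen i) (orderOf (α.cycleProd i))) :
    ∃ γ : Wreath W P I, IsConj α γ ∧ γ.pm = α.pm ∧
      (∀ i : I, γ.fn (γ.pm • i) = γ.fn i) ∧
      (∀ i : I, IsConj (γ.cycleProd i) (α.cycleProd i)) ∧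
      (∀ i : I, γ.cycleProd i = 1 ↔ γ.fn i = 1) :=
  conj_to_reduced_standard_form_general α hco
end

section
/- Let H = W ≀ P be a wreath product over a finite index set I, and let α ∈ H be in reduced standard form: α_{i·α̂} = α_i for all i, each nontrivial α_i has prime order, and α_i^{ℓ_i(α̂)} = 1 only when α_i = 1. Suppose γ ∈ H commutes with α and that α_i is constant on the orbits of γ̂. Then for every i, γ_i commutes with α_i, and γ_{i·α̂} = γ_i. -/
theorem centraliser_of_reduced_standard_form {W P I : Type*} [Group W] [Group P]
    [MulAction P I] [Fintype I] (α γ : Wreath W P I)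
    (hstd : ∀ i : I, α.fn (α.pm • i) = α.fn i)
    (hprime : ∀ i : I, α.fn i ≠ 1 → (orderOf (α.fn i)).Prime)
    (hred : ∀ i : I, α.fn i ^ α.cycleLen i = 1 → α.fn i = 1)
    (hcomm : γ * α = α * γ)
    (hconst : ∀ i : I, α.fn (γ.pm • i) = α.fn i) :
    ∀ i : I, Commute (γ.fn i) (α.fn i) ∧ γ.fn (α.pm • i) = γ.fn i := by
  have key : ∀ j : I, γ.fn (α.pm • j) = (α.fn j)⁻¹ * γ.fn j * α.fn j := by
    intro j
    have h : γ.fn j * α.fn (γ.pm • j) = α.fn j * γ.fn (α.pm • j) := by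
      have := congrFun (congrArg Prod.fst hcomm) j
      exact this
    rw [hconst] at h
    rw [mul_assoc, eq_inv_mul_iff_mul_eq]
    exact h.symm
  intro i
  have horb : ∀ k : ℕ, α.fn (α.pm ^ k • i) = α.fn i := by
    intro k
    induction k with
    | zero => rw [pow_zero, one_smul]
    | succ k ih => rw [pow_succ', mul_smul, hstd, ih]
  have iter : ∀ k : ℕ, γ.fn (α.pm ^ k • i)
      = ((α.fn i)⁻¹) ^ k * γ.fn i * (α.fn i) ^ k := by
    intro k
    induction k with
    | zero => simp
    | succ k ih =>
      rw [pow_succ', mul_smul]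
      have := key (α.pm ^ k • i)
      rw [horb k, ih] at this
      rw [this]
      rw [pow_succ, pow_succ]
      group
  have hfix : α.pm ^ α.cycleLen i • i = i := by
    have := Function.iterate_minimalPeriod (f := (α.pm • ·)) (x := i)
    rwa [smul_iterate] at this
  have hc : Commute (γ.fn i) ((α.fn i) ^ α.cycleLen i) := by
    have h := iter (α.cycleLen i)
    rw [hfix] at h
    have : (α.fn i) ^ α.cycleLen i * γ.fn i = γ.fn i * (α.fn i) ^ α.cycleLen i := by
      conv_lhs => rw [h]
      rw [inv_pow]
      group
    exact this.symm
  by_cases h1 : α.fn i = 1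
  · refine ⟨by rw [h1]; exact Commute.one_right _, ?_⟩
    rw [key i, h1]
    group
  · have hp := hprime i h1
    have hnd : ¬ orderOf (α.fn i) ∣ α.cycleLen i := by
      intro hd
      exact h1 (hred i (orderOf_dvd_iff_pow_eq_one.mp hd))
    have hcop : (α.cycleLen i).Coprime (orderOf (α.fn i)) :=
      ((Nat.Prime.coprime_iff_not_dvd hp).mpr hnd).symm
    obtain ⟨m, hm⟩ := exists_pow_eq_self_of_coprime hcop
    have hcomm' : Commute (γ.fn i) (α.fn i) := by
      rw [← hm]
      exact (hc.pow_right m)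
    refine ⟨hcomm', ?_⟩
    rw [key i, mul_assoc, hcomm'.eq, inv_mul_cancel_left]
end

section
/- Let p be a prime, q a prime power that is a power of p, and suppose x, y ∈ PSL(2, F_q) satisfy x^3 = y^2. Then either x^3 = y^2 = 1, or there exists z ∈ PSL(2, F_q) with x = z^2 and y = z^3. -/
open scoped MatrixGroups

private lemma aux_scalar {F : Type*} [Field F]
    (w00 w01 w10 w11 a00 a01 a10 a11 b00 b01 b10 b11 : F)
    (hW : ¬(w01 = 0 ∧ w10 = 0 ∧ w00 = w11))
    (E1a : a00 * w00 + a01 * w10 = w00 * a00 + w01 * a10)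
    (E2a : a00 * w01 + a01 * w11 = w00 * a01 + w01 * a11)
    (E3a : a10 * w00 + a11 * w10 = w10 * a00 + w11 * a10)
    (E1b : b00 * w00 + b01 * w10 = w00 * b00 + w01 * b10)
    (E2b : b00 * w01 + b01 * w11 = w00 * b01 + w01 * b11)
    (E3b : b10 * w00 + b11 * w10 = w10 * b00 + w11 * b10) :
    (a00 * b00 + a01 * b10 = b00 * a00 + b01 * a10) ∧
    (a00 * b01 + a01 * b11 = b00 * a01 + b01 * a11) ∧
    (a10 * b00 + a11 * b10 = b10 * a00 + b11 * a10) ∧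
    (a10 * b01 + a11 * b11 = b10 * a01 + b11 * a11) := by
  by_cases h01 : w01 = 0
  · subst h01
    by_cases h10 : w10 = 0
    · subst h10
      have hdd : w11 - w00 ≠ 0 := sub_ne_zero.mpr fun hh => hW ⟨rfl, rfl, hh.symm⟩
      have ha01 : a01 = 0 :=
        (mul_eq_zero.mp (by linear_combination E2a : a01 * (w11 - w00) = 0)).resolve_right hdd
      have hb01 : b01 = 0 :=
        (mul_eq_zero.mp (by linear_combination E2b : b01 * (w11 - w00) = 0)).resolve_right hdd
      have ha10 : a10 = 0 :=
        (mul_eq_zero.mp (by linear_combination -E3a : a10 * (w11 - w00) = 0)).resolve_right hdd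
      have hb10 : b10 = 0 :=
        (mul_eq_zero.mp (by linear_combination -E3b : b10 * (w11 - w00) = 0)).resolve_right hdd
      subst ha01 hb01 ha10 hb10
      exact ⟨by ring, by ring, by ring, by ring⟩
    · have ha01 : a01 = 0 :=
        (mul_eq_zero.mp (by linear_combination E1a : a01 * w10 = 0)).resolve_right h10
      have hb01 : b01 = 0 :=
        (mul_eq_zero.mp (by linear_combination E1b : b01 * w10 = 0)).resolve_right h10
      have ha11 : a11 = (w10 * a00 + w11 * a10 - a10 * w00) / w10 := by
        rw [eq_div_iff h10]; linear_combination E3a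
      have hb11 : b11 = (w10 * b00 + w11 * b10 - b10 * w00) / w10 := by
        rw [eq_div_iff h10]; linear_combination E3b
      subst ha01 hb01 ha11 hb11
      refine ⟨by ring, by ring, ?_, ?_⟩ <;> field_simp <;> ring
  · have ha10 : a10 = a01 * w10 / w01 := by
      rw [eq_div_iff h01]; linear_combination -E1a
    have ha11 : a11 = (a00 * w01 + a01 * w11 - w00 * a01) / w01 := by
      rw [eq_div_iff h01]; linear_combination -E2a
    have hb10 : b10 = b01 * w10 / w01 := by
      rw [eq_div_iff h01]; linear_combination -E1b
    have hb11 : b11 = (b00 * w01 + b01 * w11 - w00 * b01) / w01 := by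
      rw [eq_div_iff h01]; linear_combination -E2b
    subst ha10 ha11 hb10 hb11
    refine ⟨?_, ?_, ?_, ?_⟩ <;> field_simp <;> ring

/-- The centralizer of a non-scalar `2×2` matrix is commutative. -/
private lemma aux_matrix {F : Type*} [Field F] {W A B : Matrix (Fin 2) (Fin 2) F}
    (hW : ¬(W 0 1 = 0 ∧ W 1 0 = 0 ∧ W 0 0 = W 1 1))
    (hA : A * W = W * A) (hB : B * W = W * B) : A * B = B * A := by
  have EA : ∀ i j, (A * W) i j = (W * A) i j := fun i j => by rw [hA]
  have EB : ∀ i j, (B * W) i j = (W * B) i j := fun i j => by rw [hB]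
  have E1a := EA 0 0; have E2a := EA 0 1; have E3a := EA 1 0
  have E1b := EB 0 0; have E2b := EB 0 1; have E3b := EB 1 0
  simp only [Matrix.mul_apply, Fin.sum_univ_two] at E1a E2a E3a E1b E2b E3b
  obtain ⟨G1, G2, G3, G4⟩ := aux_scalar (W 0 0) (W 0 1) (W 1 0) (W 1 1)
    (A 0 0) (A 0 1) (A 1 0) (A 1 1) (B 0 0) (B 0 1) (B 1 0) (B 1 1)
    hW E1a E2a E3a E1b E2b E3b
  ext i j
  fin_cases i <;> fin_cases j <;>
    simp only [Matrix.mul_apply, Fin.sum_univ_two, Fin.isValue, Fin.zero_eta, Fin.mk_one] <;>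
    assumption

theorem psl2_cube_eq_square {p : ℕ} (hp : p.Prime) {F : Type*} [Field F] [Fintype F]
    [CharP F p] (x y : PSL(2, F)) (h : x ^ 3 = y ^ 2) :
    (x ^ 3 = 1 ∧ y ^ 2 = 1) ∨ ∃ z : PSL(2, F), x = z ^ 2 ∧ y = z ^ 3 := by
  by_cases hx : x ^ 3 = 1
  · exact Or.inl ⟨hx, h ▸ hx⟩
  right
  obtain ⟨X, rfl⟩ := QuotientGroup.mk_surjective x
  obtain ⟨Y, rfl⟩ := QuotientGroup.mk_surjective y
  -- The lifted relation: Y^2 = X^3 * Z with Z central.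
  have hcen : (X ^ 3)⁻¹ * Y ^ 2 ∈ Subgroup.center (Matrix.SpecialLinearGroup (Fin 2) F) := by
    apply QuotientGroup.eq.mp
    rw [QuotientGroup.mk_pow, QuotientGroup.mk_pow]
    exact h
  obtain ⟨Z, hZmem, hY2⟩ : ∃ Z ∈ Subgroup.center (Matrix.SpecialLinearGroup (Fin 2) F),
      Y ^ 2 = X ^ 3 * Z :=
    ⟨(X ^ 3)⁻¹ * Y ^ 2, hcen, (mul_inv_cancel_left _ _).symm⟩
  have hZc : ∀ g, g * Z = Z * g := Subgroup.mem_center_iff.mp hZmem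
  -- X and Y both commute with W = X^3.
  have hXW : X * X ^ 3 = X ^ 3 * X := ((Commute.refl X).pow_right 3).eq
  have hYW : Y * X ^ 3 = X ^ 3 * Y := by
    have h1 : Y * (X ^ 3 * Z) = X ^ 3 * Z * Y := by
      rw [← hY2]; exact ((Commute.refl Y).pow_right 2).eq
    have h2 : X ^ 3 * Z * Y = X ^ 3 * Y * Z := by
      rw [mul_assoc, mul_assoc, hZc Y]
    rw [h2, ← mul_assoc] at h1
    exact mul_right_cancel h1
  -- W = X^3 is not central, hence (as a matrix) not scalar.
  have hWcen : (X ^ 3) ∉ Subgroup.center (Matrix.SpecialLinearGroup (Fin 2) F) := by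
    intro hmem
    exact hx (by rw [← QuotientGroup.mk_pow]; exact (QuotientGroup.eq_one_iff _).mpr hmem)
  have hWns : ¬((X ^ 3 : Matrix.SpecialLinearGroup (Fin 2) F).val 0 1 = 0 ∧
      (X ^ 3 : Matrix.SpecialLinearGroup (Fin 2) F).val 1 0 = 0 ∧
      (X ^ 3 : Matrix.SpecialLinearGroup (Fin 2) F).val 0 0 =
      (X ^ 3 : Matrix.SpecialLinearGroup (Fin 2) F).val 1 1) := by
    rintro ⟨h1, h2, h3⟩
    apply hWcen
    have hsc : (X ^ 3 : Matrix.SpecialLinearGroup (Fin 2) F).val =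
        (X ^ 3 : Matrix.SpecialLinearGroup (Fin 2) F).val 0 0 • (1 : Matrix (Fin 2) (Fin 2) F) := by
      ext i j
      fin_cases i <;> fin_cases j <;>
        simp [Matrix.one_apply, h1, h2, h3]
    refine Subgroup.mem_center_iff.mpr fun g => Subtype.ext ?_
    rw [Matrix.SpecialLinearGroup.coe_mul, Matrix.SpecialLinearGroup.coe_mul, hsc,
      Matrix.mul_smul, Matrix.smul_mul, Matrix.mul_one, Matrix.one_mul]
  -- Hence X and Y commute.
  have hXY : X * Y = Y * X := by
    apply Subtype.ext
    rw [Matrix.SpecialLinearGroup.coe_mul, Matrix.SpecialLinearGroup.coe_mul]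
    refine aux_matrix hWns ?_ ?_
    · rw [← Matrix.SpecialLinearGroup.coe_mul, ← Matrix.SpecialLinearGroup.coe_mul, hXW]
    · rw [← Matrix.SpecialLinearGroup.coe_mul, ← Matrix.SpecialLinearGroup.coe_mul, hYW]
  have hc : Commute (QuotientGroup.mk X : PSL(2, F)) (QuotientGroup.mk Y) := by
    show _ = _
    rw [← QuotientGroup.mk_mul, ← QuotientGroup.mk_mul, hXY]
  -- z = y * x⁻¹ works.
  set a : PSL(2, F) := QuotientGroup.mk X
  set b : PSL(2, F) := QuotientGroup.mk Y
  refine ⟨b * a⁻¹, ?_, ?_⟩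
  · have h2 : (b * a⁻¹) ^ 2 = b ^ 2 * (a⁻¹) ^ 2 := (hc.symm.inv_right).mul_pow 2
    rw [h2, ← h]
    group
  · have h3 : (b * a⁻¹) ^ 3 = b ^ 3 * (a⁻¹) ^ 3 := (hc.symm.inv_right).mul_pow 3
    rw [h3, inv_pow, h]
    group
end

section
/- Let X, Y be upper triangular matrices in GL(2, K) over an algebraically closed field K with X^3 = Y^2. Then either X^3 = Y^2 is a scalar matrix, or there exists an upper triangular Z ∈ GL(2, K) with X = Z^2 and Y = Z^3. -/
/-!
Write the diagonals of `X` and `Y` as `(p, r)` and `(s, u)`. The diagonal entries of `X ^ 3 = Y ^ 2`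
give `p ^ 3 = s ^ 2` and `r ^ 3 = u ^ 2`, so `a := s / p` and `b := u / r` satisfy `a ^ 2 = p`,
`a ^ 3 = s`, `b ^ 2 = r`, `b ^ 3 = u`. With `μ`, `ν` the upper-right entries of `X`, `Y`, the
upper-right entries read `(a² + ab + b²)(a² - ab + b²) μ = (a + b)(a² - ab + b²) ν`. If
`(a + b)(a² + ab + b²)(a² - ab + b²) = 0` then `a ^ 6 = b ^ 6` and `X ^ 3` is scalar; otherwise
`Z = !![a, λ; 0, b]` with `λ = μ / (a + b) = ν / (a² + ab + b²)`.
-/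

open Matrix

namespace Matrix

variable {K : Type*}

lemma eq_of_fin_two_of_apply_one_zero [Zero K] {A : Matrix (Fin 2) (Fin 2) K} (hA : A 1 0 = 0) :
    A = !![A 0 0, A 0 1; 0, A 1 1] := by
  rw [← hA]
  exact eta_fin_two A

lemma of_fin_two_upper_inj [Zero K] {x μ y x' μ' y' : K} :
    !![x, μ; 0, y] = !![x', μ'; 0, y'] ↔ x = x' ∧ μ = μ' ∧ y = y' := by
  simp [and_assoc]

variable [CommRing K]

lemma isUnit_det_of_fin_two_upper_iff {x μ y : K} :
    IsUnit !![x, μ; 0, y].det ↔ IsUnit x ∧ IsUnit y := by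
  rw [det_fin_two_of, mul_zero, sub_zero, IsUnit.mul_iff]

lemma of_fin_two_upper_sq (x μ y : K) :
    !![x, μ; 0, y] ^ 2 = !![x ^ 2, μ * (x + y); 0, y ^ 2] := by
  rw [sq, mul_fin_two]
  ext i j
  fin_cases i <;> fin_cases j <;> simp <;> ring

lemma of_fin_two_upper_cube (x μ y : K) :
    !![x, μ; 0, y] ^ 3 = !![x ^ 3, μ * (x ^ 2 + x * y + y ^ 2); 0, y ^ 3] := by
  rw [pow_succ, of_fin_two_upper_sq, mul_fin_two]
  ext i j
  fin_cases i <;> fin_cases j <;> simp <;> ring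

lemma of_fin_two_diag_eq_smul_one (x : K) :
    !![x, 0; 0, x] = x • (1 : Matrix (Fin 2) (Fin 2) K) := by
  ext i j
  fin_cases i <;> fin_cases j <;> simp

end Matrix

section Field

variable {K : Type*} [Field K]

lemma exists_sq_eq_and_cube_eq_of_pow_three_eq_sq {x y : K} (hx : x ≠ 0) (h : x ^ 3 = y ^ 2) :
    ∃ a : K, a ^ 2 = x ∧ a ^ 3 = y :=
  ⟨y / x, by field_simp; linear_combination -h, by field_simp; linear_combination -y * h⟩

lemma pow_six_eq_and_eq_zero_or_exists_of_mul_eq (a b μ ν : K)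
    (h : μ * ((a ^ 2) ^ 2 + a ^ 2 * b ^ 2 + (b ^ 2) ^ 2) = ν * (a ^ 3 + b ^ 3)) :
    ((a ^ 2) ^ 3 = (b ^ 2) ^ 3 ∧ μ * ((a ^ 2) ^ 2 + a ^ 2 * b ^ 2 + (b ^ 2) ^ 2) = 0) ∨
      ∃ l : K, μ = l * (a + b) ∧ ν = l * (a ^ 2 + a * b + b ^ 2) := by
  by_cases hD : (a + b) * (a ^ 2 + a * b + b ^ 2) * (a ^ 2 - a * b + b ^ 2) = 0
  · refine .inl ⟨by linear_combination (a - b) * hD, ?_⟩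
    rcases mul_eq_zero.1 hD with hD | hD
    · rcases mul_eq_zero.1 hD with hD | hD
      · linear_combination h + ν * (a ^ 2 - a * b + b ^ 2) * hD
      · linear_combination μ * (a ^ 2 - a * b + b ^ 2) * hD
    · linear_combination μ * (a ^ 2 + a * b + b ^ 2) * hD
  · have hab : a + b ≠ 0 := left_ne_zero_of_mul (left_ne_zero_of_mul hD)
    have hν : ν * (a + b) = μ * (a ^ 2 + a * b + b ^ 2) :=
      mul_right_cancel₀ (right_ne_zero_of_mul hD) (by linear_combination -h)
    refine .inr ⟨μ / (a + b), by field_simp, ?_⟩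
    field_simp
    linear_combination hν

end Field

theorem upper_triangular_cube_eq_square_general {K : Type*} [Field K]
    (X Y : Matrix (Fin 2) (Fin 2) K) (hXu : IsUnit X.det)
    (hXt : X 1 0 = 0) (hYt : Y 1 0 = 0) (h : X ^ 3 = Y ^ 2) :
    (∃ c : K, X ^ 3 = c • (1 : Matrix (Fin 2) (Fin 2) K)) ∨
    ∃ Z : Matrix (Fin 2) (Fin 2) K, IsUnit Z.det ∧ Z 1 0 = 0 ∧ X = Z ^ 2 ∧ Y = Z ^ 3 := by
  obtain ⟨p, μ, r, rfl⟩ : ∃ p μ r, X = !![p, μ; 0, r] :=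
    ⟨_, _, _, eq_of_fin_two_of_apply_one_zero hXt⟩
  obtain ⟨s, ν, u, rfl⟩ : ∃ s ν u, Y = !![s, ν; 0, u] :=
    ⟨_, _, _, eq_of_fin_two_of_apply_one_zero hYt⟩
  obtain ⟨hp, hr⟩ := isUnit_det_of_fin_two_upper_iff.1 hXu
  rw [isUnit_iff_ne_zero] at hp hr
  rw [of_fin_two_upper_cube, of_fin_two_upper_sq, of_fin_two_upper_inj] at h
  obtain ⟨hps, hμν, hru⟩ := h
  obtain ⟨a, rfl, rfl⟩ := exists_sq_eq_and_cube_eq_of_pow_three_eq_sq hp hps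
  obtain ⟨b, rfl, rfl⟩ := exists_sq_eq_and_cube_eq_of_pow_three_eq_sq hr hru
  rcases pow_six_eq_and_eq_zero_or_exists_of_mul_eq a b μ ν hμν with ⟨hdiag, hoff⟩ | ⟨l, rfl, rfl⟩
  · refine .inl ⟨(a ^ 2) ^ 3, ?_⟩
    rw [of_fin_two_upper_cube, hoff, ← hdiag, of_fin_two_diag_eq_smul_one]
  · refine .inr ⟨!![a, l; 0, b], ?_, rfl, ?_, ?_⟩
    · exact isUnit_det_of_fin_two_upper_iff.2
        ⟨(pow_ne_zero_iff two_ne_zero).1 hp |>.isUnit, (pow_ne_zero_iff two_ne_zero).1 hr |>.isUnit⟩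
    · rw [of_fin_two_upper_sq]
    · rw [of_fin_two_upper_cube]

theorem upper_triangular_cube_eq_square {K : Type*} [Field K] [IsAlgClosed K]
    (X Y : Matrix (Fin 2) (Fin 2) K) (hXu : IsUnit X.det) (hYu : IsUnit Y.det)
    (hXt : X 1 0 = 0) (hYt : Y 1 0 = 0) (h : X ^ 3 = Y ^ 2) :
    (∃ c : K, X ^ 3 = c • (1 : Matrix (Fin 2) (Fin 2) K)) ∨
    ∃ Z : Matrix (Fin 2) (Fin 2) K, IsUnit Z.det ∧ Z 1 0 = 0 ∧ X = Z ^ 2 ∧ Y = Z ^ 3 :=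
  upper_triangular_cube_eq_square_general X Y hXu hXt hYt h
end
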